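/- Fix a single impulse time t₁ > 0 and constants β₁ ≥ 0 and 0 ≤ θ₁ ≤ τ₁ ≤ t₁. Let u : [0,∞) → ℝ be nonnegative, continuous on [0,t₁] and on (t₁,∞) with a (possibly jumping) right limit at t₁ and left-continuity at t₁; let f, g be nonnegative continuous functions on [0,∞), and n a positive nondecreasing continuous function. Suppose for all t ≥ 0: u(t) ≤ n(t) + ∫₀ᵗ f(s)u(s)ds + ∫₀ᵗ f(s)(∫₀ˢ g(σ)u(σ)dσ)ds + (if t > t₁ then β₁ ∫_{t₁−τ₁}^{t₁−θ₁} u(s)ds else 0). Then for all t > t₁, u(t) ≤ n(t) · C₁ · exp(∫_{t₁}^{t} f(s)(1 + ∫₀ˢ g(σ)dσ)ds), where C₁ = exp(∫₀^{t₁} f(s)(1+∫₀ˢ g(σ)dσ)ds) + β₁ ∫_{t₁−τ₁}^{t₁−θ₁} exp(∫₀ˢ f(σ)(1+∫₀^σ g(ξ)dξ)dσ) ds. -/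

import Mathlib

open intervalIntegral Real Set

lemma gronwall_aux (v d F : ℝ → ℝ) (a b : ℝ) (hab : a ≤ b)
    (hF : Continuous F)
    (hv : ContinuousOn v (Set.Icc a b))
    (hd : ∀ x ∈ Set.Ioo a b, HasDerivAt v (d x) x)
    (hle : ∀ x ∈ Set.Ioo a b, d x ≤ F x * v x) :
    ∀ t ∈ Set.Icc a b, v t ≤ v a * Real.exp (∫ s in a..t, F s) := by
  set P : ℝ → ℝ := fun t => ∫ s in a..t, F s with hPdef
  have hPd : ∀ x : ℝ, HasDerivAt P (F x) x := fun x =>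
    (hF.integral_hasStrictDerivAt a x).hasDerivAt
  have hPc : Continuous P :=
    intervalIntegral.continuous_primitive (fun a b => hF.intervalIntegrable a b) a
  set h : ℝ → ℝ := fun t => v t * Real.exp (-P t) with hhdef
  have hhd : ∀ x ∈ Set.Ioo a b,
      HasDerivAt h ((d x - F x * v x) * Real.exp (-P x)) x := by
    intro x hx
    have h1 := ((hPd x).neg).exp
    have := (hd x hx).mul h1
    exact this.congr_deriv (by simp only [Pi.neg_apply]; ring)
  have hanti : AntitoneOn h (Set.Icc a b) := by
    apply antitoneOn_of_deriv_nonpos (convex_Icc a b)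
    · exact hv.mul ((Real.continuous_exp.comp hPc.neg).continuousOn)
    · intro x hx
      rw [interior_Icc] at hx
      exact ((hhd x hx).differentiableAt).differentiableWithinAt
    · intro x hx
      rw [interior_Icc] at hx
      rw [(hhd x hx).deriv]
      have h2 := hle x hx
      have h3 := (Real.exp_pos (-P x)).le
      nlinarith
  intro t ht
  have key := hanti (Set.left_mem_Icc.2 hab) ht ht.1
  have hPa : P a = 0 := intervalIntegral.integral_same
  have : v t * Real.exp (-P t) ≤ v a := by simpa [hhdef, hPa] using key
  calc v t = v t * Real.exp (-P t) * Real.exp (P t) := by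
        rw [mul_assoc, ← Real.exp_add]; simp
    _ ≤ v a * Real.exp (P t) := by
        exact mul_le_mul_of_nonneg_right this (Real.exp_pos _).le

theorem pachpatte_single_impulse
    (u f g n : ℝ → ℝ) (t₁ β₁ θ₁ τ₁ : ℝ)
    (ht₁ : 0 < t₁) (hβ₁ : 0 ≤ β₁) (hθ₁ : 0 ≤ θ₁) (hθτ : θ₁ ≤ τ₁) (hτt : τ₁ ≤ t₁)
    (hu_nonneg : ∀ t, 0 ≤ t → 0 ≤ u t)
    (hu_cont₁ : ContinuousOn u (Set.Icc 0 t₁))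
    (hu_cont₂ : ContinuousOn u (Set.Ioi t₁))
    (hu_rlim : ∃ L : ℝ, Filter.Tendsto u (nhdsWithin t₁ (Set.Ioi t₁)) (nhds L))
    (hf_cont : Continuous f) (hf_nonneg : ∀ t, 0 ≤ f t)
    (hg_cont : Continuous g) (hg_nonneg : ∀ t, 0 ≤ g t)
    (hn_cont : Continuous n) (hn_pos : ∀ t, 0 < n t) (hn_mono : Monotone n)
    (hineq : ∀ t, 0 ≤ t →
      u t ≤ n t + (∫ s in (0:ℝ)..t, f s * u s)
        + (∫ s in (0:ℝ)..t, f s * ∫ σ in (0:ℝ)..s, g σ * u σ)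
        + (if t₁ < t then β₁ * ∫ s in (t₁ - τ₁)..(t₁ - θ₁), u s else 0)) :
    ∀ t, t₁ < t →
      u t ≤ n t *
        (Real.exp (∫ s in (0:ℝ)..t₁, f s * (1 + ∫ σ in (0:ℝ)..s, g σ))
          + β₁ * ∫ s in (t₁ - τ₁)..(t₁ - θ₁),
              Real.exp (∫ σ in (0:ℝ)..s, f σ * (1 + ∫ ξ in (0:ℝ)..σ, g ξ)))
        * Real.exp (∫ s in t₁..t, f s * (1 + ∫ σ in (0:ℝ)..s, g σ)) := by
  intro T hT
  have hT0 : (0:ℝ) ≤ T := le_of_lt (ht₁.trans hT)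
  obtain ⟨L, hL⟩ := hu_rlim
  -- integrability of u
  have hu1 : IntervalIntegrable u MeasureTheory.volume 0 t₁ := by
    apply ContinuousOn.intervalIntegrable
    rwa [Set.uIcc_of_le ht₁.le]
  have hu2 : ∀ x : ℝ, t₁ < x → IntervalIntegrable u MeasureTheory.volume t₁ x := by
    intro x hx
    set w : ℝ → ℝ := Function.update u t₁ L with hw
    have hwcont : ContinuousOn w (Set.Icc t₁ x) := by
      intro y hy
      rcases eq_or_lt_of_le hy.1 with hy1 | hy1
      · subst hy1
        have hIcc : Set.Icc t₁ x = insert t₁ (Set.Ioc t₁ x) := (Set.Ioc_insert_left hy.2).symm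
        unfold ContinuousWithinAt
        rw [hIcc, nhdsWithin_insert, Filter.tendsto_sup]
        constructor
        · simpa [hw, Function.update_self] using tendsto_pure_nhds w t₁
        · have h1 : Filter.Tendsto u (nhdsWithin t₁ (Set.Ioc t₁ x)) (nhds L) :=
            hL.mono_left (nhdsWithin_mono _ Set.Ioc_subset_Ioi_self)
          have h2 : w =ᶠ[nhdsWithin t₁ (Set.Ioc t₁ x)] u := by
            filter_upwards [self_mem_nhdsWithin] with z hz
            exact Function.update_of_ne (ne_of_gt hz.1) _ _
          have h3 : Filter.Tendsto w (nhdsWithin t₁ (Set.Ioc t₁ x)) (nhds L) :=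
            h1.congr' h2.symm
          simpa [hw, Function.update_self] using h3
      · have hyc : ContinuousAt u y :=
          hu_cont₂.continuousAt (isOpen_Ioi.mem_nhds hy1)
        have : ContinuousAt w y := by
          apply hyc.congr
          filter_upwards [isOpen_Ioi.mem_nhds hy1] with z hz
          exact (Function.update_of_ne (ne_of_gt hz) _ _).symm
        exact this.continuousWithinAt
    have hwint : IntervalIntegrable w MeasureTheory.volume t₁ x := by
      apply ContinuousOn.intervalIntegrable
      rwa [Set.uIcc_of_le hx.le]
    rw [intervalIntegrable_iff_integrableOn_Ioc_of_le hx.le] at hwint ⊢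
    apply hwint.congr_fun _ measurableSet_Ioc
    intro z hz
    exact Function.update_of_ne (ne_of_gt hz.1) _ _
  have huI : ∀ x : ℝ, 0 ≤ x → IntervalIntegrable u MeasureTheory.volume 0 x := by
    intro x hx
    rcases le_or_gt x t₁ with hxt | hxt
    · exact hu1.mono_set (by
        rw [Set.uIcc_of_le hx, Set.uIcc_of_le ht₁.le]
        exact Set.Icc_subset_Icc le_rfl hxt)
    · exact hu1.trans (hu2 x hxt)
  -- inner integral G
  set G : ℝ → ℝ := fun s => ∫ σ in (0:ℝ)..s, g σ * u σ with hGdef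
  have hguI : ∀ x : ℝ, 0 ≤ x → IntervalIntegrable (fun s => g s * u s) MeasureTheory.volume 0 x :=
    fun x hx => (huI x hx).continuousOn_mul hg_cont.continuousOn
  have hGcont : ∀ x : ℝ, 0 ≤ x → ContinuousOn G (Set.Icc 0 x) := by
    intro x hx
    have := intervalIntegral.continuousOn_primitive_interval' (hguI x hx) Set.left_mem_uIcc
    rwa [Set.uIcc_of_le hx] at this
  have hGnonneg : ∀ s : ℝ, 0 ≤ s → 0 ≤ G s := by
    intro s hs
    apply intervalIntegral.integral_nonneg hs
    intro σ hσ
    exact mul_nonneg (hg_nonneg σ) (hu_nonneg σ hσ.1)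
  -- the combined integrand h
  set h : ℝ → ℝ := fun s => f s * (u s + G s) with hhdef
  have hGI : ∀ x : ℝ, 0 ≤ x → IntervalIntegrable G MeasureTheory.volume 0 x := by
    intro x hx
    apply ContinuousOn.intervalIntegrable
    rw [Set.uIcc_of_le hx]
    exact hGcont x hx
  have hhI : ∀ x : ℝ, 0 ≤ x → IntervalIntegrable h MeasureTheory.volume 0 x := by
    intro x hx
    exact ((huI x hx).add (hGI x hx)).continuousOn_mul hf_cont.continuousOn
  have hhnn : ∀ s : ℝ, 0 ≤ s → 0 ≤ h s := fun s hs =>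
    mul_nonneg (hf_nonneg s) (add_nonneg (hu_nonneg s hs) (hGnonneg s hs))
  -- splitting the two integrals
  have hsplit : ∀ t : ℝ, 0 ≤ t →
      (∫ s in (0:ℝ)..t, f s * u s) + (∫ s in (0:ℝ)..t, f s * G s)
        = ∫ s in (0:ℝ)..t, h s := by
    intro t ht
    rw [← intervalIntegral.integral_add
      ((huI t ht).continuousOn_mul hf_cont.continuousOn)
      ((hGI t ht).continuousOn_mul hf_cont.continuousOn)]
    apply intervalIntegral.integral_congr
    intro s _
    simp only [hhdef]; ring
  set H : ℝ → ℝ := fun t => ∫ s in (0:ℝ)..t, h s with hHdef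
  set J : ℝ := ∫ s in (t₁ - τ₁)..(t₁ - θ₁), u s with hJdef
  have hjump1 : (0:ℝ) ≤ t₁ - τ₁ := by linarith
  have hjump2 : t₁ - τ₁ ≤ t₁ - θ₁ := by linarith
  have hjump3 : t₁ - θ₁ ≤ t₁ := by linarith
  have hJ0 : 0 ≤ J := by
    apply intervalIntegral.integral_nonneg hjump2
    intro s hs
    exact hu_nonneg s (le_trans hjump1 hs.1)
  have hineq' : ∀ t, 0 ≤ t →
      u t ≤ n t + H t + (if t₁ < t then β₁ * J else 0) := by
    intro t ht
    have h1 := hineq t ht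
    have h2 := hsplit t ht
    simp only [hHdef]
    linarith
  -- monotonicity of H
  have Hmono : ∀ s t : ℝ, 0 ≤ s → s ≤ t → H s ≤ H t := by
    intro s t hs hst
    have hint2 : IntervalIntegrable h MeasureTheory.volume s t :=
      (hhI t (hs.trans hst)).mono_set (by
        rw [Set.uIcc_of_le hst, Set.uIcc_of_le (hs.trans hst)]
        exact Set.Icc_subset_Icc hs le_rfl)
    have hadd : H s + ∫ x in s..t, h x = H t :=
      intervalIntegral.integral_add_adjacent_intervals (hhI s hs) hint2
    have hpos : 0 ≤ ∫ x in s..t, h x :=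
      intervalIntegral.integral_nonneg hst (fun x hx => hhnn x (hs.trans hx.1))
    linarith
  have hH0 : H 0 = 0 := intervalIntegral.integral_same
  -- the coefficient function F
  set F : ℝ → ℝ := fun s => f s * (1 + ∫ σ in (0:ℝ)..s, g σ) with hFdef
  have hFcont : Continuous F := by
    apply hf_cont.mul
    exact continuous_const.add
      (intervalIntegral.continuous_primitive (fun a b => hg_cont.intervalIntegrable a b) 0)
  set E : ℝ → ℝ := fun s => Real.exp (∫ σ in (0:ℝ)..s, F σ) with hEdef
  have hEcont : Continuous E :=
    Real.continuous_exp.comp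
      (intervalIntegral.continuous_primitive (fun a b => hFcont.intervalIntegrable a b) 0)
  -- continuity of H
  have hHcont : ContinuousOn H (Set.Icc 0 T) := by
    have := intervalIntegral.continuousOn_primitive_interval' (hhI T hT0) Set.left_mem_uIcc
    rwa [Set.uIcc_of_le hT0] at this
  -- continuity of h on the two open intervals
  have hhca1 : ∀ x ∈ Set.Ioo 0 t₁, ContinuousAt h x := by
    intro x hx
    have uca : ContinuousAt u x := hu_cont₁.continuousAt (Icc_mem_nhds hx.1 hx.2)
    have Gca : ContinuousAt G x := (hGcont t₁ ht₁.le).continuousAt (Icc_mem_nhds hx.1 hx.2)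
    exact hf_cont.continuousAt.mul (uca.add Gca)
  have hhca2 : ∀ x ∈ Set.Ioo t₁ T, ContinuousAt h x := by
    intro x hx
    have uca : ContinuousAt u x := hu_cont₂.continuousAt (isOpen_Ioi.mem_nhds hx.1)
    have Gca : ContinuousAt G x :=
      (hGcont T hT0).continuousAt (Icc_mem_nhds (ht₁.trans hx.1) hx.2)
    exact hf_cont.continuousAt.mul (uca.add Gca)
  -- derivative of H
  have hHd1 : ∀ x ∈ Set.Ioo 0 t₁, HasDerivAt H (h x) x := fun x hx =>
    intervalIntegral.integral_hasDerivAt_right (hhI x hx.1.le)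
      (ContinuousAt.stronglyMeasurableAtFilter isOpen_Ioo hhca1 x hx) (hhca1 x hx)
  have hHd2 : ∀ x ∈ Set.Ioo t₁ T, HasDerivAt H (h x) x := fun x hx =>
    intervalIntegral.integral_hasDerivAt_right (hhI x (ht₁.trans hx.1).le)
      (ContinuousAt.stronglyMeasurableAtFilter isOpen_Ioo hhca2 x hx) (hhca2 x hx)
  -- u is dominated by the first comparison function on [0, t₁]
  have hu_le_v₁ : ∀ s ∈ Set.Icc 0 t₁, u s ≤ n T + H s := by
    intro s hs
    have h1 := hineq' s hs.1
    rw [if_neg (not_lt.2 hs.2)] at h1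
    have h2 : n s ≤ n T := hn_mono (hs.2.trans hT.le)
    linarith
  -- first Gronwall application on [0, t₁]
  have gr1 : ∀ t ∈ Set.Icc 0 t₁, n T + H t ≤ n T * E t := by
    have key := gronwall_aux (fun t => n T + H t) h F 0 t₁ ht₁.le hFcont
      (continuousOn_const.add (hHcont.mono (Set.Icc_subset_Icc le_rfl hT.le)))
      (fun x hx => (hHd1 x hx).const_add (n T))
      ?_
    · intro t ht
      have := key t ht
      simpa [hH0, hEdef] using this
    · intro x hx
      have hx0 : (0:ℝ) ≤ x := hx.1.le
      have hV : ∀ σ ∈ Set.Icc 0 x, u σ ≤ n T + H x := by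
        intro σ hσ
        have := hu_le_v₁ σ ⟨hσ.1, hσ.2.trans hx.2.le⟩
        have := Hmono σ x hσ.1 hσ.2
        linarith
      have hu_le : u x ≤ n T + H x := hV x ⟨hx0, le_rfl⟩
      have hG_le : G x ≤ (∫ σ in (0:ℝ)..x, g σ) * (n T + H x) := by
        calc G x ≤ ∫ σ in (0:ℝ)..x, g σ * (n T + H x) := by
              apply intervalIntegral.integral_mono_on hx0 (hguI x hx0)
                ((hg_cont.mul continuous_const).intervalIntegrable _ _)
              intro σ hσ
              exact mul_le_mul_of_nonneg_left (hV σ hσ) (hg_nonneg σ)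
          _ = (∫ σ in (0:ℝ)..x, g σ) * (n T + H x) :=
              intervalIntegral.integral_mul_const _ _
      have hkey : f x * (u x + G x) ≤ f x * ((n T + H x) + (∫ σ in (0:ℝ)..x, g σ) * (n T + H x)) :=
        mul_le_mul_of_nonneg_left (add_le_add hu_le hG_le) (hf_nonneg x)
      have heq : f x * ((n T + H x) + (∫ σ in (0:ℝ)..x, g σ) * (n T + H x))
          = F x * (n T + H x) := by
        simp only [hFdef]; ring
      simp only [hhdef]
      linarith
  -- bound on u on [0, t₁]
  have hu_bound1 : ∀ s ∈ Set.Icc 0 t₁, u s ≤ n T * E s := fun s hs =>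
    (hu_le_v₁ s hs).trans (gr1 s hs)
  -- bound on the jump integral
  have hJb : J ≤ n T * ∫ s in (t₁ - τ₁)..(t₁ - θ₁), E s := by
    have h1 : J ≤ ∫ s in (t₁ - τ₁)..(t₁ - θ₁), n T * E s := by
      apply intervalIntegral.integral_mono_on hjump2
        (hu1.mono_set (by
          rw [Set.uIcc_of_le hjump2, Set.uIcc_of_le ht₁.le]
          exact Set.Icc_subset_Icc hjump1 hjump3))
        ((continuous_const.mul hEcont).intervalIntegrable _ _)
      intro s hs
      exact hu_bound1 s ⟨hjump1.trans hs.1, hs.2.trans hjump3⟩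
    rwa [intervalIntegral.integral_const_mul] at h1
  -- u is dominated by the second comparison function on [0, T]
  have hu_le_v₂ : ∀ s ∈ Set.Icc 0 T, u s ≤ (n T + β₁ * J) + H s := by
    intro s hs
    have h1 := hineq' s hs.1
    have h2 : n s ≤ n T := hn_mono hs.2
    have h3 : 0 ≤ β₁ * J := mul_nonneg hβ₁ hJ0
    by_cases hc : t₁ < s
    · rw [if_pos hc] at h1; linarith
    · rw [if_neg hc] at h1; linarith
  -- second Gronwall application on [t₁, T]
  have gr2 : (n T + β₁ * J) + H T
      ≤ ((n T + β₁ * J) + H t₁) * Real.exp (∫ s in t₁..T, F s) := by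
    have key := gronwall_aux (fun t => (n T + β₁ * J) + H t) h F t₁ T hT.le hFcont
      (continuousOn_const.add (hHcont.mono (Set.Icc_subset_Icc ht₁.le le_rfl)))
      (fun x hx => (hHd2 x hx).const_add _)
      ?_
    · exact key T ⟨hT.le, le_rfl⟩
    · intro x hx
      have hx0 : (0:ℝ) ≤ x := (ht₁.trans hx.1).le
      have hV : ∀ σ ∈ Set.Icc 0 x, u σ ≤ (n T + β₁ * J) + H x := by
        intro σ hσ
        have := hu_le_v₂ σ ⟨hσ.1, hσ.2.trans hx.2.le⟩
        have := Hmono σ x hσ.1 hσ.2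
        linarith
      have hu_le : u x ≤ (n T + β₁ * J) + H x := hV x ⟨hx0, le_rfl⟩
      have hG_le : G x ≤ (∫ σ in (0:ℝ)..x, g σ) * ((n T + β₁ * J) + H x) := by
        calc G x ≤ ∫ σ in (0:ℝ)..x, g σ * ((n T + β₁ * J) + H x) := by
              apply intervalIntegral.integral_mono_on hx0 (hguI x hx0)
                ((hg_cont.mul continuous_const).intervalIntegrable _ _)
              intro σ hσ
              exact mul_le_mul_of_nonneg_left (hV σ hσ) (hg_nonneg σ)
          _ = (∫ σ in (0:ℝ)..x, g σ) * ((n T + β₁ * J) + H x) :=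
              intervalIntegral.integral_mul_const _ _
      have hkey : f x * (u x + G x)
          ≤ f x * (((n T + β₁ * J) + H x) + (∫ σ in (0:ℝ)..x, g σ) * ((n T + β₁ * J) + H x)) :=
        mul_le_mul_of_nonneg_left (add_le_add hu_le hG_le) (hf_nonneg x)
      have heq : f x * (((n T + β₁ * J) + H x) + (∫ σ in (0:ℝ)..x, g σ) * ((n T + β₁ * J) + H x))
          = F x * ((n T + β₁ * J) + H x) := by
        simp only [hFdef]; ring
      simp only [hhdef]
      linarith
  -- assemble
  have hfin1 : u T ≤ (n T + β₁ * J) + H T := hu_le_v₂ T ⟨hT0, le_rfl⟩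
  have hfin2 : (n T + β₁ * J) + H t₁ ≤ n T * (E t₁ + β₁ * ∫ s in (t₁ - τ₁)..(t₁ - θ₁), E s) := by
    have h1 : n T + H t₁ ≤ n T * E t₁ := gr1 t₁ ⟨ht₁.le, le_rfl⟩
    have h2 : β₁ * J ≤ β₁ * (n T * ∫ s in (t₁ - τ₁)..(t₁ - θ₁), E s) :=
      mul_le_mul_of_nonneg_left hJb hβ₁
    have h3 : n T * (E t₁ + β₁ * ∫ s in (t₁ - τ₁)..(t₁ - θ₁), E s)
        = n T * E t₁ + β₁ * (n T * ∫ s in (t₁ - τ₁)..(t₁ - θ₁), E s) := by ring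
    linarith
  have hexp : (0:ℝ) ≤ Real.exp (∫ s in t₁..T, F s) := (Real.exp_pos _).le
  have hfin : u T ≤ n T * (E t₁ + β₁ * ∫ s in (t₁ - τ₁)..(t₁ - θ₁), E s)
      * Real.exp (∫ s in t₁..T, F s) :=
    le_trans (hfin1.trans gr2) (mul_le_mul_of_nonneg_right hfin2 hexp)
  exact hfin
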